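/- If W ∈ ℝ^{N×N} is the weighted adjacency matrix of a directed graph and tr(exp(W ∘ W)) = N (where ∘ is the Hadamard product), then the graph with edge set {(i,j) : W_{ij} ≠ 0} is acyclic. -/

import Mathlib

/-!
`B = W ⊙ W` has nonnegative entries, so every term `tr(Bᵏ) / k!` of the series of `tr(exp B)`
is nonnegative; the `k = 0` term is already `N`, hence `tr(Bᵏ) = 0` for all `k ≥ 1`. A closed
walk of length `k` through nonzero entries of `W` would contribute a positive product of
entries of `B` to the diagonal of `Bᵏ`, hence to `tr(Bᵏ)`.
-/

open Matrix NormedSpace Finset Nat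
open scoped Matrix

namespace Matrix

variable {n : Type*} [Fintype n] [DecidableEq n]

section Walks

variable {α : Type*} [CommSemiring α] [PartialOrder α] [IsOrderedRing α]
  {A : Matrix n n α}

theorem prod_walk_le_pow_apply (hA : ∀ i j, 0 ≤ A i j) (k : ℕ) (c : ℕ → n) :
    ∏ i ∈ range k, A (c i) (c (i + 1)) ≤ (A ^ k) (c 0) (c k) := by
  induction k with
  | zero => simp
  | succ k ih =>
    rw [prod_range_succ, pow_succ, mul_apply]
    calc (∏ i ∈ range k, A (c i) (c (i + 1))) * A (c k) (c (k + 1))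
        ≤ (A ^ k) (c 0) (c k) * A (c k) (c (k + 1)) := mul_le_mul_of_nonneg_right ih (hA _ _)
      _ ≤ ∑ l, (A ^ k) (c 0) l * A l (c (k + 1)) :=
          single_le_sum (f := fun l ↦ (A ^ k) (c 0) l * A l (c (k + 1)))
            (fun l _ ↦ mul_nonneg (pow_apply_nonneg hA k _ _) (hA _ _)) (mem_univ _)

theorem prod_closed_walk_le_trace_pow (hA : ∀ i j, 0 ≤ A i j) (k : ℕ) (c : ℕ → n)
    (hc : c k = c 0) : ∏ i ∈ range k, A (c i) (c (i + 1)) ≤ trace (A ^ k) :=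
  calc ∏ i ∈ range k, A (c i) (c (i + 1))
      ≤ (A ^ k) (c 0) (c 0) := hc ▸ prod_walk_le_pow_apply hA k c
    _ ≤ trace (A ^ k) := single_le_sum (fun i _ ↦ pow_apply_nonneg hA k i i) (mem_univ _)

end Walks

section linftyOp

-- Any norm inducing the product topology would do: `exp` only depends on the topology.
attribute [local instance] Matrix.linftyOpSemiNormedRing Matrix.linftyOpNormedRing
  Matrix.linftyOpNormedAlgebra

theorem hasSum_trace_exp {𝕂 : Type*} [RCLike 𝕂] (A : Matrix n n 𝕂) :
    HasSum (fun k ↦ (k ! : 𝕂)⁻¹ * trace (A ^ k)) (trace (exp A)) := by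
  have h := (exp_series_hasSum_exp' (𝕂 := 𝕂) A).map (traceAddMonoidHom n 𝕂)
    (continuous_id.matrix_trace (R := 𝕂))
  simp only [Function.comp_def, traceAddMonoidHom_apply, trace_smul, smul_eq_mul] at h
  exact h

end linftyOp

theorem trace_pow_eq_zero_of_trace_exp_eq_card {A : Matrix n n ℝ} (hA : ∀ i j, 0 ≤ A i j)
    (h : trace (exp A) = Fintype.card n) {k : ℕ} (hk : 0 < k) : trace (A ^ k) = 0 := by
  have hsum := hasSum_trace_exp A
  rw [h, ← hasSum_nat_add_iff' 1, sum_range_one, pow_zero, trace_one, factorial_zero, cast_one,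
    inv_one, one_mul, sub_self, hasSum_zero_iff_of_nonneg] at hsum
  · obtain ⟨k, rfl⟩ := Nat.exists_eq_add_of_lt hk
    simpa [factorial_ne_zero] using congrFun hsum k
  · exact fun k ↦ mul_nonneg (by positivity)
      (sum_nonneg fun i _ ↦ pow_apply_nonneg hA (k + 1) i i)

end Matrix

/-- If `tr(exp(W ∘ W)) = N` for the weighted adjacency matrix `W` (with `∘` the Hadamard
product), then the directed graph with edges `{(i,j) : W i j ≠ 0}` is acyclic: there is
no closed walk all of whose steps go through nonzero entries of `W`. -/
theorem trace_exp_hadamard_eq_card_implies_acyclic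
    (N : ℕ) (W : Matrix (Fin N) (Fin N) ℝ)
    (h : Matrix.trace (exp (W ⊙ W)) = N) :
    ∀ (k : ℕ) (c : ℕ → Fin N), 0 < k → c k = c 0 →
      ∃ i < k, W (c i) (c (i + 1)) = 0 := by
  intro k c hk hc
  by_contra! hW
  have hB : ∀ i j, 0 ≤ (W ⊙ W) i j := fun i j ↦ mul_self_nonneg (W i j)
  have hwalk : 0 < ∏ i ∈ range k, (W ⊙ W) (c i) (c (i + 1)) :=
    prod_pos fun i hi ↦ mul_self_pos.mpr (hW i (mem_range.mp hi))
  have htrace : trace ((W ⊙ W) ^ k) = 0 :=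
    trace_pow_eq_zero_of_trace_exp_eq_card hB (by simpa using h) hk
  linarith [prod_closed_walk_le_trace_pow hB k c hc]
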